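/- arXiv:2009.13218 — 2 statements merged into one kernel-verified Lean document; each statement's English description precedes it below -/
import Mathlib

section
/- Let n ≥ 3. The graph ORTHO is connected and its diameter equals 3. -/
/-- A matrix over `R = {0,-1} ⊆ ℤ` is normal: zero diagonal, entries `0` or `-1`. -/
def IsNormal {n : ℕ} (A : Matrix (Fin n) (Fin n) ℤ) : Prop :=
  (∀ i, A i i = 0) ∧ ∀ i j, A i j = 0 ∨ A i j = -1

/-- Tropical (max-plus) matrix product: `(A⊙B) i j = max_k (A i k + B k j)`. -/
noncomputable def tropMul {n : ℕ} (A B : Matrix (Fin n) (Fin n) ℤ) :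
    Matrix (Fin n) (Fin n) ℤ :=
  Matrix.of fun i j => sSup (Set.range fun k => A i k + B k j)

/-- Tropical sum: entrywise maximum. -/
def tropSum {n : ℕ} (A B : Matrix (Fin n) (Fin n) ℤ) : Matrix (Fin n) (Fin n) ℤ :=
  Matrix.of fun i j => max (A i j) (B i j)

/-- `A` is strictly normal: zero diagonal and all off-diagonal entries equal `-1`. -/
def IsStrictlyNormal {n : ℕ} (A : Matrix (Fin n) (Fin n) ℤ) : Prop :=
  (∀ i, A i i = 0) ∧ ∀ i j, i ≠ j → A i j = -1

/-- `A ∈ V(p;q)`: the `p`-th row and the `q`-th column of `A` are zero. -/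
def memV {n : ℕ} (p q : Fin n) (A : Matrix (Fin n) (Fin n) ℤ) : Prop :=
  ∀ i, A p i = 0 ∧ A i q = 0

/-- `A ∈ W(p;q)`: `A p i = 0` for `i ≠ q` and `A i q = 0` for `i ≠ p`. -/
def memW {n : ℕ} (p q : Fin n) (A : Matrix (Fin n) (Fin n) ℤ) : Prop :=
  (∀ i, i ≠ q → A p i = 0) ∧ (∀ i, i ≠ p → A i q = 0)

/-- Vertices of `ORTHO`: normal matrices that are neither strictly normal nor zero. -/
def OrthoVertex (n : ℕ) : Type :=
  {A : Matrix (Fin n) (Fin n) ℤ // IsNormal A ∧ ¬ IsStrictlyNormal A ∧ A ≠ 0}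

/-- The graph `ORTHO`: distinct vertices are adjacent iff mutually orthogonal. -/
noncomputable def orthoGraph (n : ℕ) : SimpleGraph (OrthoVertex n) where
  Adj X Y := X ≠ Y ∧ tropMul X.1 Y.1 = 0 ∧ tropMul Y.1 X.1 = 0
  symm := by
    constructor
    rintro X Y ⟨hne, h1, h2⟩
    exact ⟨hne.symm, h2, h1⟩
  loopless := ⟨fun X h => h.1 rfl⟩

/-- Vertices of `VNL`: nonzero normal matrices in some `V(p;q)` with `p ≠ q`. -/
def VNLVertex (n : ℕ) : Type :=
  {A : Matrix (Fin n) (Fin n) ℤ //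
    IsNormal A ∧ A ≠ 0 ∧ ∃ p q : Fin n, p ≠ q ∧ memV p q A}

/-- The graph `VNL`: distinct vertices `A, B` are adjacent iff there are `p, q`
with `A ∈ V(p;q)` and `B ∈ V(q;p)`. -/
def vnlGraph (n : ℕ) : SimpleGraph (VNLVertex n) where
  Adj X Y := X ≠ Y ∧ ∃ p q : Fin n, memV p q X.1 ∧ memV q p Y.1
  symm := by
    constructor
    rintro X Y ⟨hne, p, q, h1, h2⟩
    exact ⟨hne.symm, q, p, h2, h1⟩
  loopless := ⟨fun X h => h.1 rfl⟩

/-- Vertices of `WNL`: nonzero normal matrices in some `W(p;q)` with `p ≠ q`. -/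
def WNLVertex (n : ℕ) : Type :=
  {A : Matrix (Fin n) (Fin n) ℤ //
    IsNormal A ∧ A ≠ 0 ∧ ∃ p q : Fin n, p ≠ q ∧ memW p q A}

/-- The graph `WNL`: distinct vertices `A, B` are adjacent iff there are `k, m`
with one of the three `W`/`Z` sufficient conditions. -/
def wnlGraph (n : ℕ) : SimpleGraph (WNLVertex n) where
  Adj X Y := X ≠ Y ∧ ∃ k m : Fin n,
    (memW k m X.1 ∧ X.1 k m = 0 ∧ X.1 m k = 0 ∧ memW m k Y.1) ∨
    (memW k m X.1 ∧ X.1 m k = 0 ∧ memW m k Y.1 ∧ Y.1 k m = 0) ∨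
    (memW k m X.1 ∧ memW m k Y.1 ∧ Y.1 k m = 0 ∧ Y.1 m k = 0)
  symm := by
    constructor
    rintro X Y ⟨hne, k, m, hc⟩
    exact ⟨hne.symm, m, k, by tauto⟩
  loopless := ⟨fun X h => h.1 rfl⟩

/-!
Every vertex `U` has an off-diagonal zero at some `(p, q)`, and is then orthogonal to the
matrix `E_pq` whose only nonzero entry is `-1` at `(p, q)`; for `n ≥ 3` any two such matrices
are orthogonal (some index avoids `q` and `r`), so `U – E_pq – E_rs – V` gives distance `≤ 3`.
Conversely, the matrix that is strictly normal except for a `0` at `(p, q)` has `E_pq` as its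
only neighbour, so the two such matrices for `(a, b)` and `(b, a)` are at distance `≥ 3`.
-/

open SimpleGraph

section

variable {n : ℕ}

lemma IsNormal.le_zero {A : Matrix (Fin n) (Fin n) ℤ} (hA : IsNormal A) (i j : Fin n) :
    A i j ≤ 0 := by
  rcases hA.2 i j with h | h <;> omega

lemma tropMul_apply_eq_zero_iff {A B : Matrix (Fin n) (Fin n) ℤ} {i j : Fin n}
    (hA : ∀ k, A i k ≤ 0) (hB : ∀ k, B k j ≤ 0) :
    tropMul A B i j = 0 ↔ ∃ k, A i k = 0 ∧ B k j = 0 := by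
  have hS : Set.Finite (Set.range fun k => A i k + B k j) := Set.finite_range _
  -- `i` makes the range nonempty; on `∅` the junk value `sSup ∅ = 0` would break the `→` direction.
  have hne : (Set.range fun k => A i k + B k j).Nonempty := Set.range_nonempty_iff_nonempty.2 ⟨i⟩
  change sSup _ = 0 ↔ _
  constructor
  · intro h
    obtain ⟨k, hk⟩ := hne.csSup_mem hS
    refine ⟨k, ?_, ?_⟩ <;> linarith [hA k, hB k]
  · rintro ⟨k, hAk, hBk⟩
    refine le_antisymm (csSup_le hne ?_) (le_csSup hS.bddAbove ⟨k, by simp [hAk, hBk]⟩)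
    rintro _ ⟨m, rfl⟩
    linarith [hA m, hB m]

lemma tropMul_eq_zero_iff {A B : Matrix (Fin n) (Fin n) ℤ} (hA : IsNormal A) (hB : IsNormal B) :
    tropMul A B = 0 ↔ ∀ i j, ∃ k, A i k = 0 ∧ B k j = 0 := by
  simp only [← Matrix.ext_iff, Matrix.zero_apply]
  exact forall₂_congr fun i j => tropMul_apply_eq_zero_iff (hA.le_zero i) (hB.le_zero · j)

lemma isNormal_single {p q : Fin n} (hpq : p ≠ q) : IsNormal (Matrix.single p q (-1 : ℤ)) := by
  refine ⟨fun i => Matrix.single_apply_of_ne _ _ _ _ _ fun h => hpq (h.1.trans h.2.symm),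
    fun i j => ?_⟩
  by_cases h : p = i ∧ q = j
  · exact Or.inr (by rw [h.1, h.2, Matrix.single_apply_same])
  · exact Or.inl (Matrix.single_apply_of_ne _ _ _ _ _ h)

lemma tropMul_single_eq_zero {A : Matrix (Fin n) (Fin n) ℤ} (hA : IsNormal A) {p q : Fin n}
    (hpq : p ≠ q) (h : A p q = 0) : tropMul A (Matrix.single p q (-1)) = 0 := by
  rw [tropMul_eq_zero_iff hA (isNormal_single hpq)]
  intro i j
  by_cases hij : p = i ∧ q = j
  · obtain ⟨rfl, rfl⟩ := hij
    exact ⟨q, h, Matrix.single_apply_of_row_ne hpq _ _ _⟩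
  · exact ⟨i, hA.1 i, Matrix.single_apply_of_ne _ _ _ _ _ hij⟩

lemma single_tropMul_eq_zero {A : Matrix (Fin n) (Fin n) ℤ} (hA : IsNormal A) {p q : Fin n}
    (hpq : p ≠ q) (h : A p q = 0) : tropMul (Matrix.single p q (-1)) A = 0 := by
  rw [tropMul_eq_zero_iff (isNormal_single hpq) hA]
  intro i j
  by_cases hij : p = i ∧ q = j
  · obtain ⟨rfl, rfl⟩ := hij
    exact ⟨p, Matrix.single_apply_of_col_ne _ _ hpq.symm _, h⟩
  · exact ⟨j, Matrix.single_apply_of_ne _ _ _ _ _ hij, hA.1 j⟩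

lemma single_tropMul_single_eq_zero (hn : 3 ≤ n) {p q r s : Fin n} (hpq : p ≠ q) (hrs : r ≠ s) :
    tropMul (Matrix.single p q (-1)) (Matrix.single r s (-1)) = 0 := by
  rw [tropMul_eq_zero_iff (isNormal_single hpq) (isNormal_single hrs)]
  obtain ⟨k, hkq, hkr⟩ := Fin.exists_ne_and_ne_of_two_lt q r (by omega)
  exact fun i j => ⟨k, Matrix.single_apply_of_col_ne _ _ hkq.symm _,
    Matrix.single_apply_of_row_ne hkr.symm _ _ _⟩

def strictExcept (p q : Fin n) : Matrix (Fin n) (Fin n) ℤ :=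
  Matrix.of fun i j => if i = j ∨ (i = p ∧ j = q) then 0 else -1

lemma strictExcept_apply_eq_zero_iff {p q i j : Fin n} :
    strictExcept p q i j = 0 ↔ i = j ∨ (i = p ∧ j = q) := by
  simp only [strictExcept, Matrix.of_apply]
  split_ifs with h <;> simp [h]

lemma isNormal_strictExcept (p q : Fin n) : IsNormal (strictExcept p q) := by
  refine ⟨fun i => strictExcept_apply_eq_zero_iff.2 (Or.inl rfl), fun i j => ?_⟩
  simp only [strictExcept, Matrix.of_apply]
  split_ifs <;> simp

lemma apply_eq_zero_of_strictExcept_tropMul_eq_zero {C : Matrix (Fin n) (Fin n) ℤ}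
    (hC : IsNormal C) {p q : Fin n} (h : tropMul (strictExcept p q) C = 0) {i : Fin n}
    (hi : i ≠ p) (j : Fin n) : C i j = 0 := by
  obtain ⟨k, hik, hkj⟩ := (tropMul_eq_zero_iff (isNormal_strictExcept p q) hC).1 h i j
  obtain rfl | ⟨rfl, -⟩ := strictExcept_apply_eq_zero_iff.1 hik
  · exact hkj
  · exact absurd rfl hi

lemma apply_eq_zero_of_tropMul_strictExcept_eq_zero {C : Matrix (Fin n) (Fin n) ℤ}
    (hC : IsNormal C) {p q : Fin n} (h : tropMul C (strictExcept p q) = 0) (i : Fin n) {j : Fin n}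
    (hj : j ≠ q) : C i j = 0 := by
  obtain ⟨k, hik, hkj⟩ := (tropMul_eq_zero_iff hC (isNormal_strictExcept p q)).1 h i j
  obtain rfl | ⟨-, rfl⟩ := strictExcept_apply_eq_zero_iff.1 hkj
  · exact hik
  · exact absurd rfl hj

lemma eq_single_of_orthogonal_strictExcept {C : Matrix (Fin n) (Fin n) ℤ} (hC : IsNormal C)
    (hC0 : C ≠ 0) {p q : Fin n} (h₁ : tropMul (strictExcept p q) C = 0)
    (h₂ : tropMul C (strictExcept p q) = 0) : C = Matrix.single p q (-1) := by
  have hzero : ∀ i j, ¬(p = i ∧ q = j) → C i j = 0 := fun i j hij => by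
    rcases not_and_or.1 hij with hi | hj
    · exact apply_eq_zero_of_strictExcept_tropMul_eq_zero hC h₁ (Ne.symm hi) j
    · exact apply_eq_zero_of_tropMul_strictExcept_eq_zero hC h₂ i (Ne.symm hj)
  have hpq : C p q = -1 := (hC.2 p q).resolve_left fun h0 =>
    hC0 (Matrix.ext fun i j => by
      by_cases hij : p = i ∧ q = j
      · obtain ⟨rfl, rfl⟩ := hij; exact h0
      · exact hzero i j hij)
  ext i j
  by_cases hij : p = i ∧ q = j
  · obtain ⟨rfl, rfl⟩ := hij
    rw [hpq, Matrix.single_apply_same]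
  · rw [hzero i j hij, Matrix.single_apply_of_ne _ _ _ _ _ hij]

namespace OrthoVertex

lemma exists_apply_eq_zero (U : OrthoVertex n) : ∃ p q, p ≠ q ∧ U.1 p q = 0 := by
  obtain ⟨hU, hstrict, -⟩ := U.2
  have : ¬∀ i j, i ≠ j → U.1 i j = -1 := fun h => hstrict ⟨hU.1, h⟩
  push Not at this
  obtain ⟨p, q, hpq, h⟩ := this
  exact ⟨p, q, hpq, (hU.2 p q).resolve_right h⟩

def single {p q : Fin n} (hpq : p ≠ q) : OrthoVertex n :=
  ⟨Matrix.single p q (-1), isNormal_single hpq,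
    fun h => by simpa [Matrix.single_apply_of_row_ne hpq] using h.2 q p hpq.symm,
    fun h => by simpa using congr_fun₂ h p q⟩

def strictExcept {p q : Fin n} (hpq : p ≠ q) : OrthoVertex n :=
  ⟨_root_.strictExcept p q, isNormal_strictExcept p q,
    fun h => by simpa [_root_.strictExcept] using h.2 p q hpq,
    fun h => by simpa [_root_.strictExcept, hpq.symm, Ne.symm hpq] using congr_fun₂ h q p⟩

end OrthoVertex

lemma orthoGraph_adj_single {U : OrthoVertex n} {p q : Fin n} (hpq : p ≠ q) (h : U.1 p q = 0) :
    (orthoGraph n).Adj U (OrthoVertex.single hpq) :=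
  ⟨fun hU => by simp [hU, OrthoVertex.single] at h,
    tropMul_single_eq_zero U.2.1 hpq h, single_tropMul_eq_zero U.2.1 hpq h⟩

lemma orthoGraph_edist_single_le_one (hn : 3 ≤ n) {p q r s : Fin n} (hpq : p ≠ q)
    (hrs : r ≠ s) : (orthoGraph n).edist (OrthoVertex.single hpq) (OrthoVertex.single hrs) ≤ 1 := by
  rw [edist_le_one_iff_adj_or_eq]
  by_cases h : OrthoVertex.single hpq = OrthoVertex.single hrs
  · exact Or.inr h
  · exact Or.inl ⟨h, single_tropMul_single_eq_zero hn hpq hrs,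
      single_tropMul_single_eq_zero hn hrs hpq⟩

lemma orthoGraph_edist_le_three (hn : 3 ≤ n) (U V : OrthoVertex n) :
    (orthoGraph n).edist U V ≤ 3 := by
  obtain ⟨p, q, hpq, hU⟩ := U.exists_apply_eq_zero
  obtain ⟨r, s, hrs, hV⟩ := V.exists_apply_eq_zero
  calc (orthoGraph n).edist U V
      ≤ (orthoGraph n).edist U (.single hpq) + (orthoGraph n).edist (.single hpq) (.single hrs)
          + (orthoGraph n).edist (.single hrs) V :=
        SimpleGraph.edist_triangle.trans (add_le_add_left SimpleGraph.edist_triangle _)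
    _ ≤ 1 + 1 + 1 := by
        gcongr
        · exact (edist_eq_one_iff_adj.2 (orthoGraph_adj_single hpq hU)).le
        · exact orthoGraph_edist_single_le_one hn hpq hrs
        · exact (edist_eq_one_iff_adj.2 (orthoGraph_adj_single hrs hV).symm).le
    _ = 3 := by norm_num

lemma orthoGraph_neighborSet_strictExcept {p q : Fin n} (hpq : p ≠ q) :
    (orthoGraph n).neighborSet (OrthoVertex.strictExcept hpq) = {OrthoVertex.single hpq} := by
  ext C
  refine ⟨fun ⟨_, h₁, h₂⟩ => Subtype.ext (eq_single_of_orthogonal_strictExcept C.2.1 C.2.2.2 h₁ h₂),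
    ?_⟩
  rintro rfl
  exact orthoGraph_adj_single hpq (strictExcept_apply_eq_zero_iff.2 (Or.inr ⟨rfl, rfl⟩))

lemma two_lt_orthoGraph_edist_strictExcept (hn : 3 ≤ n) {a b : Fin n} (hab : a ≠ b) :
    2 < (orthoGraph n).edist (OrthoVertex.strictExcept hab)
      (OrthoVertex.strictExcept hab.symm) := by
  obtain ⟨c, hca, hcb⟩ := Fin.exists_ne_and_ne_of_two_lt a b (by omega)
  rw [two_lt_edist_iff, commonNeighbors_eq, orthoGraph_neighborSet_strictExcept,
    orthoGraph_neighborSet_strictExcept]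
  refine ⟨fun h => ?_, fun h => ?_, ?_⟩
  · simpa [OrthoVertex.strictExcept, strictExcept, hab, hab.symm]
      using congr_fun₂ (congrArg Subtype.val h) a b
  · rw [← mem_neighborSet, orthoGraph_neighborSet_strictExcept, Set.mem_singleton_iff] at h
    simpa [OrthoVertex.strictExcept, OrthoVertex.single, strictExcept, hca, hcb,
      Matrix.single_apply_of_row_ne hca.symm] using congr_fun₂ (congrArg Subtype.val h) c a
  · rw [Set.singleton_inter_eq_empty, Set.mem_singleton_iff]
    intro h
    simpa [OrthoVertex.single, Matrix.single_apply_of_row_ne hab.symm]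
      using congr_fun₂ (congrArg Subtype.val h) a b

end

theorem stmt_18 (n : ℕ) (hn : 3 ≤ n) :
    (orthoGraph n).Connected ∧ (orthoGraph n).diam = 3 := by
  obtain ⟨a, b, hab⟩ : ∃ a b : Fin n, a ≠ b := ⟨⟨0, by omega⟩, ⟨1, by omega⟩, by simp [Fin.ext_iff]⟩
  have hediam : (orthoGraph n).ediam = 3 :=
    le_antisymm (ediam_le_of_edist_le (orthoGraph_edist_le_three hn)) <| Order.add_one_le_of_lt <|
      (two_lt_orthoGraph_edist_strictExcept hn hab).trans_le edist_le_ediam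
  have : Nonempty (OrthoVertex n) := ⟨OrthoVertex.single hab⟩
  exact ⟨connected_of_ediam_ne_top (by simp [hediam]), by rw [diam, hediam]; rfl⟩
end

section
/- Let n ≥ 3. The diameter of the graph VNL equals 2. Moreover, for n ≥ 4 the diameter of the graph WNL equals 2. -/
/-!
Vertices `X ∈ V(p;q)` and `Y ∈ V(r;s)` are at distance at most `2`: unless `(r,s) = (q,p)`, the
matrix with a single `-1` at a position `(i,j)` with `i ∉ {q,s}` and `j ∉ {p,r}` lies in
`V(q;p) ∩ V(s;r)`, so it is equal or adjacent to each of them. For `WNL`, with `X ∈ W(p;q)` and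
`Y ∈ W(r;s)`, one also avoids `(i,j) ∈ {(p,q),(r,s)}`, so that this matrix vanishes at the
positions required by condition (3).

For a pair at distance exactly `2`, take the entrywise least normal matrices of `V(u;v)` and
`V(u;w)`: the first lies in `V(a;b)` or `W(a;b)` only for `(a,b) = (u,v)`, while the second
has a `-1` at `(w,u)` and at `(v,u)`, so it lies in neither `V(v;u)` nor `W(v;u)`.
-/

open SimpleGraph Matrix

namespace SimpleGraph

variable {α : Type*} {G : SimpleGraph α}

lemma edist_le_two_of_edist_le_one {u v w : α} (huw : G.edist u w ≤ 1)
    (hwv : G.edist w v ≤ 1) : G.edist u v ≤ 2 :=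
  calc G.edist u v ≤ G.edist u w + G.edist w v := G.edist_triangle
    _ ≤ 1 + 1 := add_le_add huw hwv
    _ = 2 := one_add_one_eq_two

lemma diam_eq_two_of_edist_le_two (h : ∀ u v, G.edist u v ≤ 2) {u v : α} (hne : u ≠ v)
    (hnadj : ¬ G.Adj u v) : G.diam = 2 := by
  have huv : 1 < G.edist u v := not_le.mp fun h => by
    rcases edist_le_one_iff_adj_or_eq.mp h with hadj | heq
    exacts [hnadj hadj, hne heq]
  have hediam : G.ediam = 2 :=
    le_antisymm (ediam_le_of_edist_le h) ((Order.add_one_le_of_lt huv).trans edist_le_ediam)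
  rw [diam, hediam]
  rfl

end SimpleGraph

section Pigeonhole

variable {n : ℕ}

lemma Fin.exists_ne_ne (hn : 3 ≤ n) (a b : Fin n) : ∃ i : Fin n, i ≠ a ∧ i ≠ b := by
  obtain ⟨i, -, hi⟩ := Finset.exists_mem_notMem_of_card_lt_card (s := {a, b})
    (t := Finset.univ) (by simpa using Finset.card_le_two.trans_lt (by omega))
  simp only [Finset.mem_insert, Finset.mem_singleton, not_or] at hi
  exact ⟨i, hi⟩

lemma Fin.exists_ne_ne_ne (hn : 4 ≤ n) (a b c : Fin n) :
    ∃ i : Fin n, i ≠ a ∧ i ≠ b ∧ i ≠ c := by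
  obtain ⟨i, -, hi⟩ := Finset.exists_mem_notMem_of_card_lt_card (s := {a, b, c})
    (t := Finset.univ) (by simpa using Finset.card_le_three.trans_lt (by omega))
  simp only [Finset.mem_insert, Finset.mem_singleton, not_or] at hi
  exact ⟨i, hi⟩

lemma exists_entry_avoiding_of_three_le (hn : 3 ≤ n) {p q r s : Fin n} (hpq : p ≠ q)
    (hpos : ¬(r = q ∧ s = p)) :
    ∃ i j : Fin n, i ≠ j ∧ i ≠ q ∧ i ≠ s ∧ j ≠ p ∧ j ≠ r := by
  by_cases hsp : s = p
  · subst hsp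
    obtain ⟨i, his, hiq⟩ := Fin.exists_ne_ne hn s q
    exact ⟨i, q, hiq, hiq, his, hpq.symm, fun hqr => hpos ⟨hqr.symm, rfl⟩⟩
  by_cases hrq : r = q
  · subst hrq
    obtain ⟨j, hjp, hjr⟩ := Fin.exists_ne_ne hn p r
    exact ⟨p, j, hjp.symm, hpq, Ne.symm hsp, hjp, hjr⟩
  · exact ⟨p, q, hpq, hpq, Ne.symm hsp, hpq.symm, Ne.symm hrq⟩

lemma exists_entry_avoiding_of_four_le (hn : 4 ≤ n) (p q r s : Fin n) :
    ∃ i j : Fin n, i ≠ j ∧ i ≠ q ∧ i ≠ s ∧ j ≠ p ∧ j ≠ r ∧ j ≠ q ∧ ¬(i = r ∧ j = s) := by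
  obtain ⟨j, hjp, hjr, hjq⟩ := Fin.exists_ne_ne_ne hn p r q
  by_cases hjs : j = s
  · obtain ⟨i, hiq, his, hir⟩ := Fin.exists_ne_ne_ne hn q s r
    exact ⟨i, j, hjs ▸ his, hiq, his, hjp, hjr, hjq, fun h => hir h.1⟩
  · obtain ⟨i, hiq, his, hij⟩ := Fin.exists_ne_ne_ne hn q s j
    exact ⟨i, j, hij, hiq, his, hjp, hjr, hjq, fun h => hjs h.2⟩

end Pigeonhole

lemma Matrix.single_ne_zero {m n α : Type*} [DecidableEq m] [DecidableEq n] [Zero α]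
    (i : m) (j : n) {c : α} (hc : c ≠ 0) : single i j c ≠ 0 :=
  fun h => hc (by simpa using congrFun (congrFun h i) j)

section Matrices

variable {n : ℕ}

lemma memV.memW {p q : Fin n} {A : Matrix (Fin n) (Fin n) ℤ} (h : memV p q A) :
    memW p q A :=
  ⟨fun i _ => (h i).1, fun i _ => (h i).2⟩

lemma isNormal_single_neg_one {i j : Fin n} (hij : i ≠ j) :
    IsNormal (single i j (-1 : ℤ)) :=
  ⟨fun a => single_apply_of_ne _ _ _ _ _ fun h => hij (h.1.trans h.2.symm),
    fun a b => by by_cases h : i = a ∧ j = b <;> simp [h]⟩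

lemma memV_single {i j p q : Fin n} (hp : p ≠ i) (hq : q ≠ j) (c : ℤ) :
    memV p q (single i j c) :=
  fun _ => ⟨single_apply_of_row_ne hp.symm _ _ c, single_apply_of_col_ne _ _ hq.symm c⟩

/-- The entrywise least normal matrix of `V(u;v)`. -/
def minV (u v : Fin n) : Matrix (Fin n) (Fin n) ℤ :=
  Matrix.of fun a b => if a = b ∨ a = u ∨ b = v then 0 else -1

lemma minV_apply_of_ne {u v a b : Fin n} (hab : a ≠ b) (hau : a ≠ u) (hbv : b ≠ v) :
    minV u v a b = -1 := by
  simp [minV, hab, hau, hbv]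

lemma isNormal_minV (u v : Fin n) : IsNormal (minV u v) :=
  ⟨fun a => by simp [minV], fun a b => by simp only [minV, of_apply]; split_ifs <;> simp⟩

lemma memV_minV (u v : Fin n) : memV u v (minV u v) :=
  fun _ => ⟨by simp [minV], by simp [minV]⟩

lemma minV_ne_zero {u v : Fin n} (huv : u ≠ v) : minV u v ≠ 0 := fun h => by
  simpa [minV_apply_of_ne huv.symm huv.symm huv] using congrFun (congrFun h v) u

lemma eq_of_memV_minV (hn : 3 ≤ n) {u v a b : Fin n} (h : memV a b (minV u v)) :
    a = u ∧ b = v := by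
  constructor
  · by_contra hau
    obtain ⟨c, hca, hcv⟩ := Fin.exists_ne_ne hn a v
    simpa [minV_apply_of_ne (Ne.symm hca) hau hcv] using (h c).1
  · by_contra hbv
    obtain ⟨c, hcu, hcb⟩ := Fin.exists_ne_ne hn u b
    simpa [minV_apply_of_ne hcb hcu hbv] using (h c).2

lemma eq_of_memW_minV (hn : 4 ≤ n) {u v a b : Fin n} (h : memW a b (minV u v)) :
    a = u ∧ b = v := by
  constructor
  · by_contra hau
    obtain ⟨c, hcb, hca, hcv⟩ := Fin.exists_ne_ne_ne hn b a v
    simpa [minV_apply_of_ne (Ne.symm hca) hau hcv] using h.1 c hcb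
  · by_contra hbv
    obtain ⟨c, hca, hcu, hcb⟩ := Fin.exists_ne_ne_ne hn a u b
    simpa [minV_apply_of_ne hcb hcu hbv] using h.2 c hca

lemma eq_of_minV_eq (hn : 3 ≤ n) {u v w : Fin n} (h : minV u v = minV u w) : v = w :=
  (eq_of_memV_minV hn (h ▸ memV_minV u w)).2.symm

end Matrices

section VNL

variable {n : ℕ}

lemma vnlGraph_edist_le_one {X Y : VNLVertex n} {p q : Fin n} (hX : memV p q X.1)
    (hY : memV q p Y.1) : (vnlGraph n).edist X Y ≤ 1 := by
  rw [edist_le_one_iff_adj_or_eq]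
  by_cases hXY : X = Y
  · exact Or.inr hXY
  · exact Or.inl ⟨hXY, p, q, hX, hY⟩

lemma vnlGraph_edist_le_two (hn : 3 ≤ n) (X Y : VNLVertex n) : (vnlGraph n).edist X Y ≤ 2 := by
  obtain ⟨-, -, p, q, hpq, hX⟩ := X.2
  obtain ⟨-, -, r, s, -, hY⟩ := Y.2
  by_cases hpos : r = q ∧ s = p
  · obtain ⟨rfl, rfl⟩ := hpos
    exact (vnlGraph_edist_le_one hX hY).trans (by norm_num)
  obtain ⟨i, j, hij, hiq, his, hjp, hjr⟩ := exists_entry_avoiding_of_three_le hn hpq hpos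
  have hEqp : memV q p (single i j (-1 : ℤ)) := memV_single hiq.symm hjp.symm _
  have hEsr : memV s r (single i j (-1 : ℤ)) := memV_single his.symm hjr.symm _
  let E : VNLVertex n := ⟨single i j (-1), isNormal_single_neg_one hij,
    single_ne_zero i j (by norm_num), q, p, hpq.symm, hEqp⟩
  exact edist_le_two_of_edist_le_one (w := E) (vnlGraph_edist_le_one hX hEqp)
    (vnlGraph_edist_le_one hEsr hY)

lemma vnlGraph_exists_not_adj (hn : 3 ≤ n) :
    ∃ X Y : VNLVertex n, X ≠ Y ∧ ¬ (vnlGraph n).Adj X Y := by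
  have : Nontrivial (Fin n) := Fin.nontrivial_iff_two_le.mpr (by omega)
  obtain ⟨u, v, huv⟩ := exists_pair_ne (Fin n)
  obtain ⟨w, hwu, hwv⟩ := Fin.exists_ne_ne hn u v
  refine ⟨⟨minV u v, isNormal_minV u v, minV_ne_zero huv, u, v, huv, memV_minV u v⟩,
    ⟨minV u w, isNormal_minV u w, minV_ne_zero hwu.symm, u, w, hwu.symm, memV_minV u w⟩,
    fun h => hwv (eq_of_minV_eq hn (Subtype.mk.inj h)).symm, ?_⟩
  rintro ⟨-, a, b, hX, hY⟩
  obtain ⟨rfl, rfl⟩ := eq_of_memV_minV hn hX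
  simpa [minV_apply_of_ne huv.symm huv.symm hwu.symm] using (hY a).1

end VNL

section WNL

variable {n : ℕ}

lemma wnlGraph_edist_le_one {X Y : WNLVertex n} {k m : Fin n} (hX : memW k m X.1)
    (hY : memW m k Y.1) (hYkm : Y.1 k m = 0) (hYmk : Y.1 m k = 0) :
    (wnlGraph n).edist X Y ≤ 1 := by
  rw [edist_le_one_iff_adj_or_eq]
  by_cases hXY : X = Y
  · exact Or.inr hXY
  · exact Or.inl ⟨hXY, k, m, Or.inr (Or.inr ⟨hX, hY, hYkm, hYmk⟩)⟩

lemma wnlGraph_edist_le_two (hn : 4 ≤ n) (X Y : WNLVertex n) : (wnlGraph n).edist X Y ≤ 2 := by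
  obtain ⟨-, -, p, q, hpq, hX⟩ := X.2
  obtain ⟨-, -, r, s, -, hY⟩ := Y.2
  obtain ⟨i, j, hij, hiq, his, hjp, hjr, hjq, hrs⟩ := exists_entry_avoiding_of_four_le hn p q r s
  have hEqp : memV q p (single i j (-1 : ℤ)) := memV_single hiq.symm hjp.symm _
  have hEsr : memV s r (single i j (-1 : ℤ)) := memV_single his.symm hjr.symm _
  let E : WNLVertex n := ⟨single i j (-1), isNormal_single_neg_one hij,
    single_ne_zero i j (by norm_num), q, p, hpq.symm, hEqp.memW⟩
  refine edist_le_two_of_edist_le_one (w := E)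
    (wnlGraph_edist_le_one hX hEqp.memW ?_ ?_)
    (edist_comm ▸ wnlGraph_edist_le_one hY hEsr.memW ?_ ?_)
  all_goals exact single_apply_of_ne _ _ _ _ _ (by grind)

lemma exists_memW_of_wnlGraph_adj {X Y : WNLVertex n} (h : (wnlGraph n).Adj X Y) :
    ∃ k m : Fin n, memW k m X.1 ∧ memW m k Y.1 := by
  obtain ⟨-, k, m, h | h | h⟩ := h
  exacts [⟨k, m, h.1, h.2.2.2⟩, ⟨k, m, h.1, h.2.2.1⟩, ⟨k, m, h.1, h.2.1⟩]

lemma wnlGraph_exists_not_adj (hn : 4 ≤ n) :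
    ∃ X Y : WNLVertex n, X ≠ Y ∧ ¬ (wnlGraph n).Adj X Y := by
  have : Nontrivial (Fin n) := Fin.nontrivial_iff_two_le.mpr (by omega)
  obtain ⟨u, v, huv⟩ := exists_pair_ne (Fin n)
  obtain ⟨w, hwu, hwv⟩ := Fin.exists_ne_ne (by omega) u v
  refine ⟨⟨minV u v, isNormal_minV u v, minV_ne_zero huv, u, v, huv, (memV_minV u v).memW⟩,
    ⟨minV u w, isNormal_minV u w, minV_ne_zero hwu.symm, u, w, hwu.symm, (memV_minV u w).memW⟩,
    fun h => hwv (eq_of_minV_eq (by omega) (Subtype.mk.inj h)).symm, fun hadj => ?_⟩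
  obtain ⟨a, b, hX, hY⟩ := exists_memW_of_wnlGraph_adj hadj
  obtain ⟨rfl, rfl⟩ := eq_of_memW_minV hn hX
  simpa [minV_apply_of_ne hwu hwu hwu.symm] using hY.2 w hwv

end WNL

theorem stmt_19 (n : ℕ) (hn : 3 ≤ n) :
    (vnlGraph n).diam = 2 ∧ (4 ≤ n → (wnlGraph n).diam = 2) := by
  constructor
  · obtain ⟨X, Y, hne, hnadj⟩ := vnlGraph_exists_not_adj hn
    exact diam_eq_two_of_edist_le_two (vnlGraph_edist_le_two hn) hne hnadj
  · intro hn4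
    obtain ⟨X, Y, hne, hnadj⟩ := wnlGraph_exists_not_adj hn4
    exact diam_eq_two_of_edist_le_two (wnlGraph_edist_le_two hn4) hne hnadj
end
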